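/- arXiv:2211.11051 — 5 statements merged into one kernel-verified Lean document; each statement's English description precedes it below -/
import Mathlib

section
/- For a smooth unit vector field n: Ω → S² on an open set Ω ⊆ ℝ³, setting M = n ⊗ n (i.e., M_ij = n_i n_j), one has the identity |n × curl n|² = (1/2) M_rs ∂_r M_ij ∂_s M_ij (summation over repeated indices), where curl n is the usual curl of n. -/
open scoped BigOperators

/-- For a smooth unit vector field `n : Ω → S²` on an open `Ω ⊆ ℝ³`, with
`M = n ⊗ n`, one has `|n × curl n|² = (1/2) M_rs ∂_r M_ij ∂_s M_ij`. -/
theorem stmt_0 (Ω : Set (Fin 3 → ℝ)) (hΩ : IsOpen Ω)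
    (n : (Fin 3 → ℝ) → (Fin 3 → ℝ))
    (hsm : ContDiffOn ℝ (⊤ : ℕ∞) n Ω)
    (hunit : ∀ y ∈ Ω, ∑ i, (n y i) ^ 2 = 1)
    (x : Fin 3 → ℝ) (hx : x ∈ Ω) :
    -- D j i = ∂_j n_i at x
    let D : Fin 3 → Fin 3 → ℝ := fun j i => fderiv ℝ n x (Pi.single j 1) i
    -- c = curl n at x
    let c : Fin 3 → ℝ := ![D 1 2 - D 2 1, D 2 0 - D 0 2, D 0 1 - D 1 0]
    -- cross = n × curl n at x
    let cross : Fin 3 → ℝ := ![n x 1 * c 2 - n x 2 * c 1,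
                               n x 2 * c 0 - n x 0 * c 2,
                               n x 0 * c 1 - n x 1 * c 0]
    -- DM r i j = ∂_r M_ij at x, where M_ij = n_i n_j
    let DM : Fin 3 → Fin 3 → Fin 3 → ℝ :=
      fun r i j => fderiv ℝ (fun y => n y i * n y j) x (Pi.single r 1)
    ∑ i, (cross i) ^ 2
      = (1 / 2) * ∑ r, ∑ s, ∑ i, ∑ j, (n x r * n x s) * DM r i j * DM s i j := by
  intro D c cross DM
  have hmem : Ω ∈ nhds x := hΩ.mem_nhds hx
  have hdiff : DifferentiableAt ℝ n x :=
    (hsm.contDiffAt hmem).differentiableAt (by simp)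
  have hn : HasFDerivAt n (fderiv ℝ n x) x := hdiff.hasFDerivAt
  have hcomp : ∀ i : Fin 3, HasFDerivAt (fun y => n y i)
      ((ContinuousLinearMap.proj i).comp (fderiv ℝ n x)) x :=
    fun i => (ContinuousLinearMap.proj (R := ℝ) (φ := fun _ : Fin 3 => ℝ) i).hasFDerivAt.comp x hn
  -- product rule for DM
  have hDM : ∀ r i j : Fin 3, DM r i j = D r i * n x j + n x i * D r j := by
    intro r i j
    have h : fderiv ℝ (fun y => n y i * n y j) x = _ := ((hcomp i).mul (hcomp j)).fderiv
    show fderiv ℝ (fun y => n y i * n y j) x (Pi.single r 1) = _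
    rw [h]
    simp [D]
    ring
  -- derivative of the unit constraint
  have hval : ∀ r : Fin 3, ∑ k : Fin 3, n x k * D r k = 0 := by
    intro r
    have h1 : HasFDerivAt (fun y => ∑ k : Fin 3, n y k * n y k)
        (∑ k : Fin 3, (n x k • ((ContinuousLinearMap.proj k).comp (fderiv ℝ n x))
          + n x k • ((ContinuousLinearMap.proj k).comp (fderiv ℝ n x)))) x :=
      HasFDerivAt.fun_sum (fun k _ => (hcomp k).mul (hcomp k))
    have h2 : HasFDerivAt (fun y => ∑ k : Fin 3, n y k * n y k)
        (0 : (Fin 3 → ℝ) →L[ℝ] ℝ) x := by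
      apply (hasFDerivAt_const (1 : ℝ) x).congr_of_eventuallyEq
      filter_upwards [hmem] with y hy
      have := hunit y hy
      simpa [sq] using this
    have heq := h1.unique h2
    have h3 := congrArg (fun L : (Fin 3 → ℝ) →L[ℝ] ℝ => L (Pi.single r 1)) heq
    simp only [ContinuousLinearMap.coe_sum', Finset.sum_apply,
      ContinuousLinearMap.add_apply, ContinuousLinearMap.coe_smul',
      Pi.smul_apply, ContinuousLinearMap.coe_comp', Function.comp_apply,
      ContinuousLinearMap.proj_apply, ContinuousLinearMap.zero_apply,
      smul_eq_mul] at h3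
    have h4 : (2 : ℝ) * ∑ k : Fin 3, n x k * D r k = 0 := by
      rw [Finset.mul_sum]
      rw [← h3]
      apply Finset.sum_congr rfl
      intro k _
      simp [D]
      ring
    linarith
  have hnorm : ∑ k : Fin 3, n x k ^ 2 = 1 := hunit x hx
  -- key inner identity
  have key : ∀ r s : Fin 3, ∑ i : Fin 3, ∑ j : Fin 3, DM r i j * DM s i j
      = 2 * ∑ i : Fin 3, D r i * D s i := by
    intro r s
    simp only [hDM]
    have h1 := hval r
    have h2 := hval s
    simp only [Fin.sum_univ_three] at h1 h2 hnorm ⊢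
    linear_combination (2 * (D r 0 * D s 0 + D r 1 * D s 1 + D r 2 * D s 2)) * hnorm
      + (2 * (n x 0 * D s 0 + n x 1 * D s 1 + n x 2 * D s 2)) * h1
  -- cross components
  have hc0 : cross 0 = -(∑ r : Fin 3, n x r * D r 0) := by
    show n x 1 * c 2 - n x 2 * c 1 = _
    show n x 1 * (D 0 1 - D 1 0) - n x 2 * (D 2 0 - D 0 2) = _
    have h := hval 0
    simp only [Fin.sum_univ_three] at h ⊢
    linear_combination h
  have hc1 : cross 1 = -(∑ r : Fin 3, n x r * D r 1) := by
    show n x 2 * c 0 - n x 0 * c 2 = _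
    show n x 2 * (D 1 2 - D 2 1) - n x 0 * (D 0 1 - D 1 0) = _
    have h := hval 1
    simp only [Fin.sum_univ_three] at h ⊢
    linear_combination h
  have hc2 : cross 2 = -(∑ r : Fin 3, n x r * D r 2) := by
    show n x 0 * c 1 - n x 1 * c 0 = _
    show n x 0 * (D 2 0 - D 0 2) - n x 1 * (D 1 2 - D 2 1) = _
    have h := hval 2
    simp only [Fin.sum_univ_three] at h ⊢
    linear_combination h
  have hcross : ∀ i : Fin 3, cross i = -(∑ r : Fin 3, n x r * D r i) := by
    intro i
    fin_cases i
    · exact hc0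
    · exact hc1
    · exact hc2
  calc ∑ i : Fin 3, (cross i) ^ 2
      = ∑ i : Fin 3, (∑ r : Fin 3, n x r * D r i) ^ 2 := by
        apply Finset.sum_congr rfl; intro i _; rw [hcross]; ring
    _ = (1 / 2) * ∑ r : Fin 3, ∑ s : Fin 3,
          n x r * n x s * (2 * ∑ i : Fin 3, D r i * D s i) := by
        simp only [Fin.sum_univ_three]; ring
    _ = (1 / 2) * ∑ r, ∑ s, ∑ i, ∑ j, (n x r * n x s) * DM r i j * DM s i j := by
        congr 1
        apply Finset.sum_congr rfl; intro r _
        apply Finset.sum_congr rfl; intro s _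
        rw [← key r s, Finset.mul_sum]
        apply Finset.sum_congr rfl; intro i _
        rw [Finset.mul_sum]
        apply Finset.sum_congr rfl; intro j _
        ring
end

section
/- Let n: Ω → S¹ be a smooth planar unit vector field, Q = (1/√2)(n ⊗ n − I/2), and define A(Q)(∇Q, ∇Q) := (√2 Q_hk + (1/2)δ_hk) ∂_h Q_ij ∂_k Q_ij (summation convention). Then A(Q)(∇Q, ∇Q) = (∂_1 n_2 − ∂_2 n_1)² = |curl n|² pointwise. -/
open scoped BigOperators

/-- For a smooth planar unit vector field `n : Ω → S¹`, with
`Q = (1/√2)(n⊗n − I/2)` and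
`A(Q)(∇Q,∇Q) = (√2 Q_hk + δ_hk/2) ∂_h Q_ij ∂_k Q_ij`, one has
`A(Q)(∇Q,∇Q) = (∂_1 n_2 − ∂_2 n_1)² = |curl n|²` pointwise. -/
theorem stmt_4 (Ω : Set (Fin 2 → ℝ)) (hΩ : IsOpen Ω)
    (n : (Fin 2 → ℝ) → (Fin 2 → ℝ))
    (hsm : ContDiffOn ℝ (⊤ : ℕ∞) n Ω)
    (hunit : ∀ y ∈ Ω, (n y 0) ^ 2 + (n y 1) ^ 2 = 1)
    (x : Fin 2 → ℝ) (hx : x ∈ Ω) :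
    let Q : (Fin 2 → ℝ) → Fin 2 → Fin 2 → ℝ := fun y i j =>
      (1 / Real.sqrt 2) * (n y i * n y j - if i = j then 1 / 2 else 0)
    let DQ : Fin 2 → Fin 2 → Fin 2 → ℝ := fun k i j =>
      fderiv ℝ (fun y => Q y i j) x (Pi.single k 1)
    let D : Fin 2 → Fin 2 → ℝ := fun k i => fderiv ℝ n x (Pi.single k 1) i
    ∑ h, ∑ k, ∑ i, ∑ j,
        (Real.sqrt 2 * Q x h k + (if h = k then (1 : ℝ) / 2 else 0))
          * DQ h i j * DQ k i j
      = (D 0 1 - D 1 0) ^ 2 := by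
  intro Q DQ D
  have hs : Real.sqrt 2 ^ 2 = 2 := Real.sq_sqrt (by norm_num)
  have hspos : (0:ℝ) < Real.sqrt 2 := Real.sqrt_pos.mpr (by norm_num)
  have h12 : (1:ℝ)/Real.sqrt 2 = Real.sqrt 2/2 := by
    rw [div_eq_div_iff (ne_of_gt hspos) (by norm_num), one_mul, ← pow_two, hs]
  -- differentiability of n at x
  have hdn : DifferentiableAt ℝ n x :=
    (hsm.contDiffAt (hΩ.mem_nhds hx)).differentiableAt (by simp)
  -- derivative of components
  have hcomp : ∀ i : Fin 2, HasFDerivAt (fun y => n y i)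
      ((ContinuousLinearMap.proj i).comp (fderiv ℝ n x)) x := by
    intro i
    have h := (ContinuousLinearMap.proj (R := ℝ) (φ := fun _ : Fin 2 => ℝ)
      i).hasFDerivAt.comp x hdn.hasFDerivAt
    exact h
  -- derivative of Q components
  have hDQ : ∀ k i j : Fin 2, DQ k i j
      = Real.sqrt 2/2 * (n x i * D k j + n x j * D k i) := by
    intro k i j
    have hQd : HasFDerivAt (fun y => Q y i j)
        ((1/Real.sqrt 2) •
          (n x i • ((ContinuousLinearMap.proj j).comp (fderiv ℝ n x))
            + n x j • ((ContinuousLinearMap.proj i).comp (fderiv ℝ n x)))) x :=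
      (((hcomp i).mul (hcomp j)).sub_const _).const_mul _
    have : DQ k i j = ((1/Real.sqrt 2) •
          (n x i • ((ContinuousLinearMap.proj j).comp (fderiv ℝ n x))
            + n x j • ((ContinuousLinearMap.proj i).comp (fderiv ℝ n x))))
        (Pi.single k 1) := by
      have h' : fderiv ℝ (fun y => Q y i j) x = _ := hQd.fderiv
      show fderiv ℝ (fun y => Q y i j) x (Pi.single k 1) = _
      rw [h']
    rw [this]
    simp only [ContinuousLinearMap.smul_apply, ContinuousLinearMap.add_apply,
      ContinuousLinearMap.coe_comp', Function.comp_apply,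
      ContinuousLinearMap.proj_apply, smul_eq_mul]
    show 1/Real.sqrt 2 * (n x i * D k j + n x j * D k i) = _
    rw [h12]
  -- the unit constraint differentiated
  have hc : ∀ k : Fin 2, n x 0 * D k 0 + n x 1 * D k 1 = 0 := by
    intro k
    have heq : (fun y => n y 0 * n y 0 + n y 1 * n y 1)
        =ᶠ[nhds x] fun _ => (1:ℝ) := by
      filter_upwards [hΩ.mem_nhds hx] with y hy
      have := hunit y hy
      nlinarith [this]
    have h0 : HasFDerivAt (fun y => n y 0 * n y 0 + n y 1 * n y 1)
        (0 : (Fin 2 → ℝ) →L[ℝ] ℝ) x :=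
      (hasFDerivAt_const (1:ℝ) x).congr_of_eventuallyEq heq
    have h1 : HasFDerivAt (fun y => n y 0 * n y 0 + n y 1 * n y 1)
        ((n x 0 • ((ContinuousLinearMap.proj 0).comp (fderiv ℝ n x))
          + n x 0 • ((ContinuousLinearMap.proj 0).comp (fderiv ℝ n x)))
          + (n x 1 • ((ContinuousLinearMap.proj 1).comp (fderiv ℝ n x))
          + n x 1 • ((ContinuousLinearMap.proj 1).comp (fderiv ℝ n x)))) x :=
      ((hcomp 0).mul (hcomp 0)).add ((hcomp 1).mul (hcomp 1))
    have hu := h1.unique h0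
    have := ContinuousLinearMap.ext_iff.mp hu (Pi.single k 1)
    simp only [ContinuousLinearMap.add_apply, ContinuousLinearMap.smul_apply,
      ContinuousLinearMap.coe_comp', Function.comp_apply,
      ContinuousLinearMap.proj_apply, smul_eq_mul,
      ContinuousLinearMap.zero_apply] at this
    have h' : n x 0 * D k 0 + n x 0 * D k 0 + (n x 1 * D k 1 + n x 1 * D k 1)
        = 0 := this
    linarith
  have hQx : ∀ i j : Fin 2, Q x i j
      = Real.sqrt 2/2 * (n x i * n x j - if i = j then 1/2 else 0) := by
    intro i j
    show (1/Real.sqrt 2) * _ = _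
    rw [h12]
  have h1 : (n x 0)^2 + (n x 1)^2 = 1 := hunit x hx
  have hc0 := hc 0
  have hc1 := hc 1
  simp only [Fin.sum_univ_two, hDQ, hQx]
  norm_num
  set s := Real.sqrt 2 with hsdef
  set a := n x 0 with hadef
  set b := n x 1 with hbdef
  set d00 := D 0 0 with h00
  set d01 := D 0 1 with h01
  set d10 := D 1 0 with h10
  set d11 := D 1 1 with h11
  linear_combination
    (d10^2 - 2*d01*d10 + d01^2 + b^2*d11^2 + b^2*d10^2 + 2*b^2*d01*d10
      + b^2*d01^2 + 2*a*b*d01*d11 + 4*a*b*d00*d10 + 2*a*b*d00*d01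
      + a^2*d01^2 + 2*a^2*d00^2) * h1
    + (4*b*d10 - 2*b^3*d10 - b^3*d01 + 2*a*d00 + 2*a*b^2*d11 - a*b^2*d00) * hc0
    + (b*d11 + b^3*d11 - a*d10 + 2*a*d01 + a*b^2*d10) * hc1
    + ((-1/4)*b^2*d11^2*s^2 + (-1/8)*b^2*d10^2*s^2 + (-1/4)*b^2*d01^2*s^2
      + (-1/8)*b^2*d00^2*s^2 + b^4*d11^2 + (1/2)*b^4*d11^2*s^2
      + (1/2)*b^4*d10^2 + (1/4)*b^4*d10^2*s^2 + (-1/4)*a*b*d10*d11*s^2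
      + (-1/4)*a*b*d00*d01*s^2 + a*b^3*d10*d11 + (1/2)*a*b^3*d10*d11*s^2
      + 2*a*b^3*d01*d11 + a*b^3*d01*d11*s^2 + a*b^3*d00*d10
      + (1/2)*a*b^3*d00*d10*s^2 + (-1/8)*a^2*d11^2*s^2 + (-1/4)*a^2*d10^2*s^2
      + (-1/8)*a^2*d01^2*s^2 + (-1/4)*a^2*d00^2*s^2 + (1/2)*a^2*b^2*d11^2
      + (1/4)*a^2*b^2*d11^2*s^2 + a^2*b^2*d10^2 + (1/2)*a^2*b^2*d10^2*s^2
      + a^2*b^2*d01*d10 + (1/2)*a^2*b^2*d01*d10*s^2 + a^2*b^2*d01^2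
      + (1/2)*a^2*b^2*d01^2*s^2 + a^2*b^2*d00*d11 + (1/2)*a^2*b^2*d00*d11*s^2
      + (1/2)*a^2*b^2*d00^2 + (1/4)*a^2*b^2*d00^2*s^2 + a^3*b*d01*d11
      + (1/2)*a^3*b*d01*d11*s^2 + 2*a^3*b*d00*d10 + a^3*b*d00*d10*s^2
      + a^3*b*d00*d01 + (1/2)*a^3*b*d00*d01*s^2 + (1/2)*a^4*d01^2
      + (1/4)*a^4*d01^2*s^2 + a^4*d00^2 + (1/2)*a^4*d00^2*s^2) * hs
end

section
/- Define φ_α(Q⁺, Q⁻, ν) = |Q⁺ − Q⁻|^α (1 + √2 |Q⁺ν·ν − Q⁻ν·ν| / |Q⁺ − Q⁻|)^{1/2} for Q⁺ ≠ Q⁻ in N := {(1/√2)(n⊗n − I/2) : n ∈ S¹} and ν ∈ S¹. If Q^± correspond to directors at angles β₊, β₋ and ν = (cos γ, sin γ), then φ_α(Q⁺, Q⁻, ν) = |sin(β₊ − β₋)|^α (1 + |sin(β₊ + β₋ − 2γ)|)^{1/2} = |sin(β₊ − β₋)|^α (|cos((β₊+β₋)/2 − γ)| + |sin((β₊+β₋)/2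 − γ)|). -/
open scoped BigOperators

set_option maxHeartbeats 1000000 in
/-- Angular form of the jump energy density `φ_α`. -/
theorem stmt_11 (α : ℝ) (hα : 0 < α ∧ α < 1) (βp βm γ : ℝ) :
    let np : Fin 2 → ℝ := ![Real.cos βp, Real.sin βp]
    let nm : Fin 2 → ℝ := ![Real.cos βm, Real.sin βm]
    let ν : Fin 2 → ℝ := ![Real.cos γ, Real.sin γ]
    let Qp : Fin 2 → Fin 2 → ℝ := fun i j =>
      (1 / Real.sqrt 2) * (np i * np j - if i = j then 1 / 2 else 0)
    let Qm : Fin 2 → Fin 2 → ℝ := fun i j =>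
      (1 / Real.sqrt 2) * (nm i * nm j - if i = j then 1 / 2 else 0)
    -- Frobenius norm of Q⁺ − Q⁻ and jump of the quadratic form at ν
    let frob : ℝ := Real.sqrt (∑ i, ∑ j, (Qp i j - Qm i j) ^ 2)
    let δ : ℝ := |(∑ i, ∑ j, Qp i j * ν i * ν j)
                  - (∑ i, ∑ j, Qm i j * ν i * ν j)|
    Qp ≠ Qm →
      (frob ^ α * Real.sqrt (1 + Real.sqrt 2 * δ / frob)
          = |Real.sin (βp - βm)| ^ α
            * Real.sqrt (1 + |Real.sin (βp + βm - 2 * γ)|)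
        ∧ frob ^ α * Real.sqrt (1 + Real.sqrt 2 * δ / frob)
          = |Real.sin (βp - βm)| ^ α
            * (|Real.cos ((βp + βm) / 2 - γ)| + |Real.sin ((βp + βm) / 2 - γ)|)) := by
  intro np nm ν Qp Qm frob δ hne
  have h2 : Real.sqrt 2 ^ 2 = 2 := Real.sq_sqrt (by norm_num)
  have h2pos : (0:ℝ) < Real.sqrt 2 := Real.sqrt_pos.mpr (by norm_num)
  have h2ne : Real.sqrt 2 ≠ 0 := ne_of_gt h2pos
  have ha : ((1 : ℝ) / Real.sqrt 2) ^ 2 = 1 / 2 := by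
    rw [div_pow, one_pow, h2]
  have hA := Real.sin_sq_add_cos_sq βp
  have hB := Real.sin_sq_add_cos_sq βm
  -- sum of squares equals sin^2 (βp - βm)
  have hsum : (∑ i, ∑ j, (Qp i j - Qm i j) ^ 2) = Real.sin (βp - βm) ^ 2 := by
    simp only [Qp, Qm, np, nm, Fin.sum_univ_two, Matrix.cons_val_zero, Matrix.cons_val_one,
      Matrix.head_cons]
    norm_num
    rw [Real.sin_sub]
    linear_combination
      (((Real.cos βp * Real.cos βp - Real.cos βm * Real.cos βm) ^ 2
        + (Real.cos βp * Real.sin βp - Real.cos βm * Real.sin βm) ^ 2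
        + (Real.sin βp * Real.cos βp - Real.sin βm * Real.cos βm) ^ 2
        + (Real.sin βp * Real.sin βp - Real.sin βm * Real.sin βm) ^ 2)) * ha
      + (((Real.sin βp ^ 2 + Real.cos βp ^ 2) - (Real.sin βm ^ 2 + Real.cos βm ^ 2)) / 2) * hA
      + (((Real.sin βm ^ 2 + Real.cos βm ^ 2) - (Real.sin βp ^ 2 + Real.cos βp ^ 2)) / 2) * hB
  -- sin (βp - βm) ≠ 0
  have hsne : Real.sin (βp - βm) ≠ 0 := by
    intro h0
    apply hne
    have hz : (∑ i, ∑ j, (Qp i j - Qm i j) ^ 2) = 0 := by rw [hsum, h0]; ring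
    funext i j
    have hrow := (Finset.sum_eq_zero_iff_of_nonneg (fun i _ =>
      Finset.sum_nonneg fun j _ => sq_nonneg (Qp i j - Qm i j))).mp hz i (Finset.mem_univ i)
    have hterm := (Finset.sum_eq_zero_iff_of_nonneg (fun j _ =>
      sq_nonneg (Qp i j - Qm i j))).mp hrow j (Finset.mem_univ j)
    have := sq_eq_zero_iff.mp hterm
    linarith
  have hfrob : frob = |Real.sin (βp - βm)| := by
    have : frob = Real.sqrt (∑ i, ∑ j, (Qp i j - Qm i j) ^ 2) := rfl
    rw [this, hsum, Real.sqrt_sq_eq_abs]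
  have hfpos : 0 < |Real.sin (βp - βm)| := abs_pos.mpr hsne
  -- value of the quadratic-form jump
  have hdiff : (∑ i, ∑ j, Qp i j * ν i * ν j) - (∑ i, ∑ j, Qm i j * ν i * ν j)
      = (1 / Real.sqrt 2) * (Real.cos (βp - γ) ^ 2 - Real.cos (βm - γ) ^ 2) := by
    simp only [Qp, Qm, np, nm, ν, Fin.sum_univ_two, Matrix.cons_val_zero, Matrix.cons_val_one,
      Matrix.head_cons]
    norm_num
    rw [Real.cos_sub, Real.cos_sub]
    ring
  have hcos2 : Real.cos (βp - γ) ^ 2 - Real.cos (βm - γ) ^ 2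
      = -(Real.sin (βp + βm - 2 * γ) * Real.sin (βp - βm)) := by
    have hx := Real.sin_sq_add_cos_sq (βp - γ)
    have hy := Real.sin_sq_add_cos_sq (βm - γ)
    have e1 : βp + βm - 2 * γ = (βp - γ) + (βm - γ) := by ring
    have e2 : βp - βm = (βp - γ) - (βm - γ) := by ring
    rw [e1, e2, Real.sin_add (βp - γ) (βm - γ), Real.sin_sub (βp - γ) (βm - γ)]
    linear_combination Real.cos (βm - γ) ^ 2 * hx - Real.cos (βp - γ) ^ 2 * hy
  have hδ : δ = (1 / Real.sqrt 2) * (|Real.sin (βp + βm - 2 * γ)| * |Real.sin (βp - βm)|) := by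
    have hδdef : δ = |(∑ i, ∑ j, Qp i j * ν i * ν j) - (∑ i, ∑ j, Qm i j * ν i * ν j)| := rfl
    rw [hδdef, hdiff, hcos2, abs_mul, abs_neg, abs_mul,
      abs_of_nonneg (by positivity : (0:ℝ) ≤ 1 / Real.sqrt 2)]
  have hratio : Real.sqrt 2 * δ / frob = |Real.sin (βp + βm - 2 * γ)| := by
    rw [hδ, hfrob, eq_comm, eq_div_iff (ne_of_gt hfpos)]
    field_simp
  have key1 : frob ^ α * Real.sqrt (1 + Real.sqrt 2 * δ / frob)
      = |Real.sin (βp - βm)| ^ α * Real.sqrt (1 + |Real.sin (βp + βm - 2 * γ)|) := by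
    rw [hratio, hfrob]
  refine ⟨key1, ?_⟩
  rw [key1]
  congr 1
  set θ := (βp + βm) / 2 - γ with hθ
  have hS : βp + βm - 2 * γ = 2 * θ := by rw [hθ]; ring
  rw [hS, Real.sin_two_mul]
  have habs : |2 * Real.sin θ * Real.cos θ| = 2 * (|Real.sin θ| * |Real.cos θ|) := by
    rw [abs_mul, abs_mul, abs_two]; ring
  have hsq : 1 + |2 * Real.sin θ * Real.cos θ| = (|Real.cos θ| + |Real.sin θ|) ^ 2 := by
    rw [habs]
    nlinarith [Real.sin_sq_add_cos_sq θ, sq_abs (Real.sin θ), sq_abs (Real.cos θ),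
      abs_nonneg (Real.sin θ), abs_nonneg (Real.cos θ)]
  rw [hsq, Real.sqrt_sq (by positivity)]
end

section
/- For all Q⁺ ≠ Q⁻ in N and ν ∈ S¹, one has √2 |Q⁺ν·ν − Q⁻ν·ν| ≤ |Q⁺ − Q⁻|, and consequently |Q⁺−Q⁻|^α ≤ φ_α(Q⁺, Q⁻, ν) ≤ √2 |Q⁺−Q⁻|^α. -/
open scoped BigOperators
open Matrix

/-- The jump energy density `φ_α(Q⁺,Q⁻,ν) = |Q⁺−Q⁻|^α (1 + √2|Q⁺ν·ν − Q⁻ν·ν|/|Q⁺−Q⁻|)^{1/2}`. -/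
noncomputable def phiAlpha (α : ℝ) (A B : Matrix (Fin 2) (Fin 2) ℝ)
    (ν : Fin 2 → ℝ) : ℝ :=
  Real.sqrt (∑ i, ∑ j, (A i j - B i j) ^ 2) ^ α *
    Real.sqrt (1 + Real.sqrt 2 * |(A.mulVec ν ⬝ᵥ ν) - (B.mulVec ν ⬝ᵥ ν)|
      / Real.sqrt (∑ i, ∑ j, (A i j - B i j) ^ 2))

/-!
For unit vectors `p, m, ν` of the plane the Frobenius distance of `Q_p = (p ⊗ p − I/2)/√2` and
`Q_m` is `√(1 − (p·m)²)`, while `(Q_p − Q_m)ν·ν = ((p·ν)² − (m·ν)²)/√2`. Writing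
`p·ν = cos a`, `m·ν = cos b`, so that `p·m = cos (a − b)`, the first claim becomes
`(cos² a − cos² b)² = sin² (a + b) sin² (a − b) ≤ sin² (a − b)`.
Then `φ_α = |Q_p − Q_m|^α √(1 + t)` with `0 ≤ t ≤ 1`.
-/

noncomputable def frobDist {n : Type*} [Fintype n] (A B : Matrix n n ℝ) : ℝ :=
  Real.sqrt (∑ i, ∑ j, (A i j - B i j) ^ 2)

theorem le_phiAlpha (α : ℝ) (A B : Matrix (Fin 2) (Fin 2) ℝ) (ν : Fin 2 → ℝ) :
    frobDist A B ^ α ≤ phiAlpha α A B ν :=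
  le_mul_of_one_le_right (by unfold frobDist; positivity)
    (Real.one_le_sqrt.mpr (le_add_of_nonneg_right (by positivity)))

theorem phiAlpha_le {α : ℝ} {A B : Matrix (Fin 2) (Fin 2) ℝ} {ν : Fin 2 → ℝ}
    (h : Real.sqrt 2 * |A *ᵥ ν ⬝ᵥ ν - B *ᵥ ν ⬝ᵥ ν| ≤ frobDist A B) :
    phiAlpha α A B ν ≤ Real.sqrt 2 * frobDist A B ^ α := by
  rw [mul_comm (Real.sqrt 2)]
  refine mul_le_mul_of_nonneg_left (Real.sqrt_le_sqrt ?_) (by positivity)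
  have : Real.sqrt 2 * |A *ᵥ ν ⬝ᵥ ν - B *ᵥ ν ⬝ᵥ ν| / frobDist A B ≤ 1 :=
    div_le_one_of_le₀ h (Real.sqrt_nonneg _)
  unfold frobDist at this
  linarith

theorem dotProduct_self_fin_two (p : Fin 2 → ℝ) : p ⬝ᵥ p = p 0 ^ 2 + p 1 ^ 2 := by
  simp [dotProduct, Fin.sum_univ_two, sq]

theorem sq_sub_sq_dotProduct_sq_le {p m v : Fin 2 → ℝ} (hp : p ⬝ᵥ p = 1) (hm : m ⬝ᵥ m = 1)
    (hv : v ⬝ᵥ v = 1) :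
    ((p ⬝ᵥ v) ^ 2 - (m ⬝ᵥ v) ^ 2) ^ 2 ≤ 1 - (p ⬝ᵥ m) ^ 2 := by
  simp only [dotProduct_self_fin_two] at hp hm hv
  simp only [dotProduct, Fin.sum_univ_two]
  set ca := p 0 * v 0 + p 1 * v 1
  set cb := m 0 * v 0 + m 1 * v 1
  set sa := p 1 * v 0 - p 0 * v 1
  set sb := m 1 * v 0 - m 0 * v 1
  set sdiff := p 0 * m 1 - p 1 * m 0
  have hsdiff : 1 - (p 0 * m 0 + p 1 * m 1) ^ 2 = sdiff ^ 2 := by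
    linear_combination (-(m 0 ^ 2 + m 1 ^ 2)) * hp - hm
  have hcos : ca ^ 2 - cb ^ 2 = (sa * cb + ca * sb) * sdiff := by
    linear_combination cb ^ 2 * hp - ca ^ 2 * hm
  have hs : (sa * cb + ca * sb) ^ 2 + (ca * cb - sa * sb) ^ 2 = 1 := by
    linear_combination (m 0 ^ 2 + m 1 ^ 2) * (v 0 ^ 2 + v 1 ^ 2) ^ 2 * hp
      + (v 0 ^ 2 + v 1 ^ 2) ^ 2 * hm + (v 0 ^ 2 + v 1 ^ 2 + 1) * hv
  rw [hsdiff, hcos]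
  nlinarith [sq_nonneg ((ca * cb - sa * sb) * sdiff)]

noncomputable def uniaxial (n : Fin 2 → ℝ) : Matrix (Fin 2) (Fin 2) ℝ :=
  Matrix.of fun i j => (1 / Real.sqrt 2) * (n i * n j - if i = j then 1 / 2 else 0)

theorem frobDist_uniaxial {p m : Fin 2 → ℝ} (hp : p ⬝ᵥ p = 1) (hm : m ⬝ᵥ m = 1) :
    frobDist (uniaxial p) (uniaxial m) = Real.sqrt (1 - (p ⬝ᵥ m) ^ 2) := by
  rw [dotProduct_self_fin_two] at hp hm
  have hsqrt2 : Real.sqrt 2 ^ 2 = 2 := Real.sq_sqrt zero_le_two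
  unfold frobDist uniaxial
  congr 1
  simp only [Fin.sum_univ_two, dotProduct, of_apply]
  field_simp
  rw [hsqrt2]
  linear_combination (p 0 ^ 2 + p 1 ^ 2 + 1) * hp + (m 0 ^ 2 + m 1 ^ 2 + 1) * hm

theorem uniaxial_mulVec_dotProduct_sub (p m v : Fin 2 → ℝ) :
    uniaxial p *ᵥ v ⬝ᵥ v - uniaxial m *ᵥ v ⬝ᵥ v
      = ((p ⬝ᵥ v) ^ 2 - (m ⬝ᵥ v) ^ 2) / Real.sqrt 2 := by
  simp only [uniaxial, mulVec, dotProduct, Fin.sum_univ_two, of_apply]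
  field_simp
  ring

theorem sqrt_two_mul_abs_uniaxial_sub_le_frobDist {p m v : Fin 2 → ℝ} (hp : p ⬝ᵥ p = 1)
    (hm : m ⬝ᵥ m = 1) (hv : v ⬝ᵥ v = 1) :
    Real.sqrt 2 * |uniaxial p *ᵥ v ⬝ᵥ v - uniaxial m *ᵥ v ⬝ᵥ v|
      ≤ frobDist (uniaxial p) (uniaxial m) := by
  rw [uniaxial_mulVec_dotProduct_sub, abs_div, abs_of_pos (by positivity : 0 < Real.sqrt 2),
    mul_div_cancel₀ _ (by positivity), frobDist_uniaxial hp hm]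
  exact Real.abs_le_sqrt (sq_sub_sq_dotProduct_sq_le hp hm hv)

theorem stmt_15_general (α : ℝ) (np nm ν : Fin 2 → ℝ)
    (hp : (np 0) ^ 2 + (np 1) ^ 2 = 1)
    (hm : (nm 0) ^ 2 + (nm 1) ^ 2 = 1)
    (hν : (ν 0) ^ 2 + (ν 1) ^ 2 = 1) :
    let Qp : Matrix (Fin 2) (Fin 2) ℝ := Matrix.of fun i j =>
      (1 / Real.sqrt 2) * (np i * np j - if i = j then 1 / 2 else 0)
    let Qm : Matrix (Fin 2) (Fin 2) ℝ := Matrix.of fun i j =>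
      (1 / Real.sqrt 2) * (nm i * nm j - if i = j then 1 / 2 else 0)
    let frob : ℝ := Real.sqrt (∑ i, ∑ j, (Qp i j - Qm i j) ^ 2)
    Qp ≠ Qm →
      (Real.sqrt 2 * |(Qp.mulVec ν ⬝ᵥ ν) - (Qm.mulVec ν ⬝ᵥ ν)| ≤ frob
        ∧ frob ^ α ≤ phiAlpha α Qp Qm ν
        ∧ phiAlpha α Qp Qm ν ≤ Real.sqrt 2 * frob ^ α) := by
  intro Qp Qm frob _
  have key : Real.sqrt 2 * |uniaxial np *ᵥ ν ⬝ᵥ ν - uniaxial nm *ᵥ ν ⬝ᵥ ν|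
      ≤ frobDist (uniaxial np) (uniaxial nm) :=
    sqrt_two_mul_abs_uniaxial_sub_le_frobDist ((dotProduct_self_fin_two np).trans hp)
      ((dotProduct_self_fin_two nm).trans hm) ((dotProduct_self_fin_two ν).trans hν)
  exact ⟨key, le_phiAlpha α Qp Qm ν, phiAlpha_le key⟩

/-- For `Q⁺ ≠ Q⁻` in `N` and `ν ∈ S¹`: `√2|Q⁺ν·ν − Q⁻ν·ν| ≤ |Q⁺−Q⁻|`, and
consequently `|Q⁺−Q⁻|^α ≤ φ_α(Q⁺,Q⁻,ν) ≤ √2 |Q⁺−Q⁻|^α`. -/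
theorem stmt_15 (α : ℝ) (hα : 0 < α ∧ α < 1) (np nm ν : Fin 2 → ℝ)
    (hp : (np 0) ^ 2 + (np 1) ^ 2 = 1)
    (hm : (nm 0) ^ 2 + (nm 1) ^ 2 = 1)
    (hν : (ν 0) ^ 2 + (ν 1) ^ 2 = 1) :
    let Qp : Matrix (Fin 2) (Fin 2) ℝ := Matrix.of fun i j =>
      (1 / Real.sqrt 2) * (np i * np j - if i = j then 1 / 2 else 0)
    let Qm : Matrix (Fin 2) (Fin 2) ℝ := Matrix.of fun i j =>
      (1 / Real.sqrt 2) * (nm i * nm j - if i = j then 1 / 2 else 0)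
    let frob : ℝ := Real.sqrt (∑ i, ∑ j, (Qp i j - Qm i j) ^ 2)
    Qp ≠ Qm →
      (Real.sqrt 2 * |(Qp.mulVec ν ⬝ᵥ ν) - (Qm.mulVec ν ⬝ᵥ ν)| ≤ frob
        ∧ frob ^ α ≤ phiAlpha α Qp Qm ν
        ∧ phiAlpha α Qp Qm ν ≤ Real.sqrt 2 * frob ^ α) :=
  stmt_15_general α np nm ν hp hm hν
end

section
/- Let L > 0 and let C be the parabola x₂ = L/2 − x₁²/(2L) for x₁ ∈ [−L, L]. At each point p = (x₁, x₂) ∈ C with p ≠ 0, the unit normal ν(p) to C at p satisfies (e_r(p) · ν(p))² = (e₂ · ν(p))², where e_r(p) = p/|p| is the radial unit vector and e₂ = (0,1); that is, ν bisects the angle between the radial direction and the vertical direction. -/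
/-- On the parabola `x₂ = L/2 − x₁²/(2L)`, at each point `p ≠ 0` the unit
normal `ν(p)` satisfies `(e_r(p)·ν(p))² = (e₂·ν(p))²`, i.e. `ν` bisects the
angle between the radial and vertical directions. -/
theorem stmt_18 (L : ℝ) (hL : 0 < L) (x₁ : ℝ) (hx : x₁ ∈ Set.Icc (-L) L)
    (p : ℝ × ℝ) (hp : p = (x₁, L / 2 - x₁ ^ 2 / (2 * L))) (hp0 : p ≠ 0) :
    -- unnormalized normal to the graph of f(x₁) = L/2 − x₁²/(2L): (f'(x₁), −1)
    let ν₀ : ℝ × ℝ := (-x₁ / L, -1)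
    -- unit normal
    let ν : ℝ × ℝ := (ν₀.1 / Real.sqrt (ν₀.1 ^ 2 + ν₀.2 ^ 2),
                      ν₀.2 / Real.sqrt (ν₀.1 ^ 2 + ν₀.2 ^ 2))
    -- radial unit vector e_r(p) = p/|p|
    let er : ℝ × ℝ := (p.1 / Real.sqrt (p.1 ^ 2 + p.2 ^ 2),
                       p.2 / Real.sqrt (p.1 ^ 2 + p.2 ^ 2))
    (er.1 * ν.1 + er.2 * ν.2) ^ 2 = (ν.2) ^ 2 := by
  intro ν₀ ν er
  have hL' : L ≠ 0 := ne_of_gt hL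
  have hApos : 0 < (-x₁ / L) ^ 2 + (-1 : ℝ) ^ 2 := by positivity
  have hBpos : 0 < p.1 ^ 2 + p.2 ^ 2 := by
    rcases Prod.mk.injEq .. ▸ (Prod.ext_iff.not.mp hp0) with h
    have : p.1 ≠ 0 ∨ p.2 ≠ 0 := by
      by_contra hc
      push_neg at hc
      exact hp0 (Prod.ext hc.1 hc.2)
    rcases this with h | h <;> positivity
  set A := Real.sqrt ((-x₁ / L) ^ 2 + (-1 : ℝ) ^ 2) with hA
  set B := Real.sqrt (p.1 ^ 2 + p.2 ^ 2) with hB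
  have hA2 : A ^ 2 = (-x₁ / L) ^ 2 + (-1 : ℝ) ^ 2 := Real.sq_sqrt hApos.le
  have hB2 : B ^ 2 = p.1 ^ 2 + p.2 ^ 2 := Real.sq_sqrt hBpos.le
  have hAne : A ≠ 0 := ne_of_gt (Real.sqrt_pos.mpr hApos)
  have hBne : B ≠ 0 := ne_of_gt (Real.sqrt_pos.mpr hBpos)
  have hp1 : p.1 = x₁ := by rw [hp]
  have hp2 : p.2 = L / 2 - x₁ ^ 2 / (2 * L) := by rw [hp]
  show (p.1 / B * ((-x₁ / L) / A) + p.2 / B * ((-1 : ℝ) / A)) ^ 2 = ((-1 : ℝ) / A) ^ 2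
  have key : (p.1 * (x₁ / L) + p.2) ^ 2 = B ^ 2 := by
    rw [hB2, hp1, hp2]; field_simp; ring
  have expand : (p.1 / B * ((-x₁ / L) / A) + p.2 / B * ((-1 : ℝ) / A)) ^ 2
      = (p.1 * (x₁ / L) + p.2) ^ 2 / (B ^ 2 * A ^ 2) := by
    field_simp; ring
  rw [expand, key]
  field_simp
end
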